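/- arXiv:2009.06550 — 2 statements merged into one kernel-verified Lean document; each statement's English description precedes it below -/
import Mathlib

section
/- Suppose {x ∈ C : A x ∈ −K} = {0} (the primal recession cone is trivial) and either C is a linear subspace of E or A(relint C) intersects the linear span of K. Then for every b ∈ E' the following three statements are equivalent: (1) b belongs to the dual cone of rec Y := {y ∈ K* : A* y ∈ C*}; (2) the primal feasible set X(b) is nonempty; (3) X(b) is almost feasible. -/
open RealInnerProductSpace Set Pointwise

variable {E E' : Type*}
  [NormedAddCommGroup E] [InnerProductSpace ℝ E] [FiniteDimensional ℝ E]
  [NormedAddCommGroup E'] [InnerProductSpace ℝ E'] [FiniteDimensional ℝ E']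

/-- A nonempty closed convex cone containing `0`. -/
structure IsClosedConvexCone {F : Type*} [NormedAddCommGroup F] [InnerProductSpace ℝ F]
    (K : Set F) : Prop where
  closed : IsClosed K
  convex : Convex ℝ K
  smul_mem : ∀ ⦃x⦄, x ∈ K → ∀ ⦃t : ℝ⦄, 0 ≤ t → t • x ∈ K
  zero_mem : (0 : F) ∈ K

/-- The dual cone `S* = {y : ⟨x,y⟩ ≥ 0 ∀ x ∈ S}`. -/
def dualCone {F : Type*} [NormedAddCommGroup F] [InnerProductSpace ℝ F] (S : Set F) : Set F :=
  {y | ∀ x ∈ S, 0 ≤ ⟪x, y⟫}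

/-- The polar cone `S° = {y : ⟨x,y⟩ ≤ 0 ∀ x ∈ S}`. -/
def polarCone {F : Type*} [NormedAddCommGroup F] [InnerProductSpace ℝ F] (S : Set F) : Set F :=
  {y | ∀ x ∈ S, ⟪x, y⟫ ≤ 0}

/-- Primal feasible set `X(b) = {x ∈ C : b - A x ∈ K}`. -/
def Xfeas (A : E →ₗ[ℝ] E') (K : Set E') (C : Set E) (b : E') : Set E :=
  {x | x ∈ C ∧ b - A x ∈ K}

/-- Dual feasible set `Y(c) = {y ∈ K* : A* y - c ∈ C*}`. -/
def Yfeas (A : E →ₗ[ℝ] E') (K : Set E') (C : Set E) (c : E) : Set E' :=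
  {y | y ∈ dualCone K ∧ LinearMap.adjoint A y - c ∈ dualCone C}

/-- Primal optimal value `P* = sup {⟨c,x⟩ : x ∈ X(b)}`. -/
noncomputable def Pval (A : E →ₗ[ℝ] E') (K : Set E') (C : Set E) (b : E') (c : E) : ℝ :=
  sSup ((fun x => ⟪c, x⟫) '' Xfeas A K C b)

/-- Dual optimal value `D* = inf {⟨b,y⟩ : y ∈ Y(c)}`. -/
noncomputable def Dval (A : E →ₗ[ℝ] E') (K : Set E') (C : Set E) (b : E') (c : E) : ℝ :=
  sInf ((fun y => ⟪b, y⟫) '' Yfeas A K C c)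

/-- Recession cone of the primal feasible region: `{x ∈ C : A x ∈ -K}`. -/
def recXSet (A : E →ₗ[ℝ] E') (K : Set E') (C : Set E) : Set E :=
  {x | x ∈ C ∧ A x ∈ -K}

/-- Recession cone of the dual feasible region: `{y ∈ K* : A* y ∈ C*}`. -/
def recYSet (A : E →ₗ[ℝ] E') (K : Set E') (C : Set E) : Set E' :=
  {y | y ∈ dualCone K ∧ LinearMap.adjoint A y ∈ dualCone C}

/-- `X(b)` is almost feasible. -/
def AlmostFeasX (A : E →ₗ[ℝ] E') (K : Set E') (C : Set E) (b : E') : Prop :=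
  ∀ ε : ℝ, 0 < ε → ∃ bε : E', ‖bε‖ ≤ ε ∧ (Xfeas A K C (b + bε)).Nonempty

/-- `Y(c)` is almost feasible. -/
def AlmostFeasY (A : E →ₗ[ℝ] E') (K : Set E') (C : Set E) (c : E) : Prop :=
  ∀ ε : ℝ, 0 < ε → ∃ cε : E, ‖cε‖ ≤ ε ∧ (Yfeas A K C (c + cε)).Nonempty

open Filter Topology

/-!
Feasibility of `X(b)` means `b ∈ A(C) + K`, and `rec Y` is the dual cone of `A(C) + K`, so by the
bipolar theorem all three statements say that `b` lies in the closure of `A(C) + K`, once that cone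
is known to be closed. Closedness comes from the trivial recession cone: the map `(x, k) ↦ A x + k`
vanishes on `C × K` only at `0`, hence by compactness of the unit sphere it is bounded below on the
cone `C × K`, and the image of a closed cone under such a map is closed.
-/

section ConeImage

variable {F G : Type*} [NormedAddCommGroup F] [NormedSpace ℝ F] [ProperSpace F]
  [NormedAddCommGroup G] [NormedSpace ℝ G]

theorem exists_pos_mul_norm_le_norm_apply_of_cone (L : F →L[ℝ] G) {Q : Set F}
    (hQc : IsClosed Q) (hQ : ∀ q ∈ Q, ∀ t : ℝ, 0 < t → t • q ∈ Q)
    (hker : ∀ q ∈ Q, L q = 0 → q = 0) :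
    ∃ c > 0, ∀ q ∈ Q, c * ‖q‖ ≤ ‖L q‖ := by
  have hunit : ∀ q ∈ Q, q ≠ 0 → ‖q‖⁻¹ • q ∈ Q ∩ Metric.sphere 0 1 := fun q hq hq0 =>
    ⟨hQ q hq _ (inv_pos.mpr (norm_pos_iff.mpr hq0)), by simp [norm_smul, hq0]⟩
  have hscale : ∀ q : F, q ≠ 0 → ‖q‖ * ‖L (‖q‖⁻¹ • q)‖ = ‖L q‖ := fun q hq0 => by
    rw [map_smul, norm_smul, norm_inv, norm_norm, mul_inv_cancel_left₀ (norm_ne_zero_iff.mpr hq0)]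
  rcases (Q ∩ Metric.sphere (0 : F) 1).eq_empty_or_nonempty with hS | hS
  · refine ⟨1, one_pos, fun q hq => ?_⟩
    obtain rfl : q = 0 := by_contra fun hq0 => hS.subset (hunit q hq hq0)
    simp
  obtain ⟨u, ⟨huQ, hu1⟩, hmin⟩ := (isCompact_sphere (0 : F) 1).inter_left hQc
    |>.exists_isMinOn hS (continuous_norm.comp L.continuous).continuousOn
  have hu0 : u ≠ 0 := ne_zero_of_mem_unit_sphere ⟨u, hu1⟩
  refine ⟨‖L u‖, norm_pos_iff.mpr fun h => hu0 (hker u huQ h), fun q hq => ?_⟩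
  rcases eq_or_ne q 0 with rfl | hq0
  · simp
  calc ‖L u‖ * ‖q‖ ≤ ‖L (‖q‖⁻¹ • q)‖ * ‖q‖ :=
        mul_le_mul_of_nonneg_right (hmin (hunit q hq hq0)) (norm_nonneg q)
    _ = ‖L q‖ := by rw [mul_comm, hscale q hq0]

theorem isClosed_image_of_cone (L : F →L[ℝ] G) {Q : Set F}
    (hQc : IsClosed Q) (hQ : ∀ q ∈ Q, ∀ t : ℝ, 0 < t → t • q ∈ Q)
    (hker : ∀ q ∈ Q, L q = 0 → q = 0) :
    IsClosed (L '' Q) := by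
  obtain ⟨c, hc, hbound⟩ := exists_pos_mul_norm_le_norm_apply_of_cone L hQc hQ hker
  refine isClosed_of_closure_subset fun y hy => ?_
  obtain ⟨u, hu, huy⟩ := mem_closure_iff_seq_limit.mp hy
  choose q hqQ hqu using hu
  obtain ⟨R, hR⟩ := isBounded_iff_forall_norm_le.mp (Metric.isBounded_range_of_tendsto u huy)
  have hq_bdd : ∀ n, q n ∈ Metric.closedBall 0 (R / c) := fun n => by
    rw [mem_closedBall_zero_iff, le_div_iff₀ hc, mul_comm]
    exact (hbound _ (hqQ n)).trans (hqu n ▸ hR _ (mem_range_self n))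
  obtain ⟨x, -, φ, hφ, hx⟩ := tendsto_subseq_of_bounded Metric.isBounded_closedBall hq_bdd
  refine ⟨x, hQc.mem_of_tendsto hx (Eventually.of_forall fun n => hqQ _), ?_⟩
  have hLx : Tendsto (fun n => L (q (φ n))) atTop (𝓝 (L x)) := (L.continuous.tendsto x).comp hx
  refine tendsto_nhds_unique hLx ?_
  simpa only [Function.comp_def, hqu] using huy.comp hφ.tendsto_atTop

end ConeImage

section Bipolar

variable {F : Type*} [NormedAddCommGroup F] [InnerProductSpace ℝ F]

theorem IsClosedConvexCone.add_mem {D : Set F} (hD : IsClosedConvexCone D) {a b : F}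
    (ha : a ∈ D) (hb : b ∈ D) : a + b ∈ D := by
  have hmid := hD.convex ha hb (by norm_num : (0 : ℝ) ≤ 1 / 2) (by norm_num : (0 : ℝ) ≤ 1 / 2)
    (by norm_num)
  convert hD.smul_mem hmid (by norm_num : (0 : ℝ) ≤ 2) using 1
  rw [smul_add, smul_smul, smul_smul]
  norm_num

theorem IsClosedConvexCone.dualCone_dualCone [CompleteSpace F] {D : Set F}
    (hD : IsClosedConvexCone D) : dualCone (dualCone D) = D := by
  let P : ProperCone ℝ F :=
    { carrier := D
      add_mem' := hD.add_mem
      zero_mem' := hD.zero_mem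
      smul_mem' := fun c _ hx => hD.smul_mem hx c.2
      isClosed' := hD.closed }
  have hdual : ∀ S : Set F, dualCone S = ProperCone.innerDual S := fun _ => rfl
  rw [hdual, hdual]
  exact congrArg SetLike.coe (ProperCone.innerDual_innerDual P)

end Bipolar

section Feasibility

variable {V W : Type*} [NormedAddCommGroup V] [InnerProductSpace ℝ V]
  [NormedAddCommGroup W] [InnerProductSpace ℝ W] (A : V →ₗ[ℝ] W) {K : Set W} {C : Set V}

theorem Xfeas_nonempty_iff_mem_image_add (b : W) :
    (Xfeas A K C b).Nonempty ↔ b ∈ ⇑A '' C + K := by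
  constructor
  · rintro ⟨x, hxC, hxK⟩
    exact ⟨A x, mem_image_of_mem A hxC, b - A x, hxK, add_sub_cancel _ _⟩
  · rintro ⟨_, ⟨x, hxC, rfl⟩, k, hkK, rfl⟩
    exact ⟨x, hxC, by simpa using hkK⟩

theorem almostFeasX_iff_mem_closure (b : W) :
    AlmostFeasX A K C b ↔ b ∈ closure (⇑A '' C + K) := by
  simp only [AlmostFeasX, Xfeas_nonempty_iff_mem_image_add, Metric.mem_closure_iff]
  constructor
  · intro h ε hε
    obtain ⟨bε, hbε, hmem⟩ := h (ε / 2) (half_pos hε)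
    refine ⟨b + bε, hmem, ?_⟩
    rw [dist_eq_norm, sub_add_cancel_left, norm_neg]
    exact hbε.trans_lt (half_lt_self hε)
  · intro h ε hε
    obtain ⟨d, hd, hbd⟩ := h ε hε
    refine ⟨d - b, ?_, by rwa [add_sub_cancel]⟩
    rw [← dist_eq_norm, dist_comm]
    exact hbd.le

end Feasibility

section RecessionCones

variable (A : E →ₗ[ℝ] E') {K : Set E'} {C : Set E}

theorem recYSet_eq_dualCone_image_add (hK : (0 : E') ∈ K) (hC : (0 : E) ∈ C) :
    recYSet A K C = dualCone (⇑A '' C + K) := by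
  ext y
  constructor
  · rintro ⟨hyK, hyC⟩ _ ⟨_, ⟨x, hxC, rfl⟩, k, hkK, rfl⟩
    have hAx : 0 ≤ ⟪A x, y⟫ := by simpa [LinearMap.adjoint_inner_right] using hyC x hxC
    rw [inner_add_left]
    exact add_nonneg hAx (hyK k hkK)
  · intro hy
    refine ⟨fun k hk => ?_, fun x hx => ?_⟩
    · simpa using hy (A 0 + k) ⟨A 0, mem_image_of_mem A hC, k, hk, rfl⟩
    · rw [LinearMap.adjoint_inner_right]
      simpa using hy (A x + 0) ⟨A x, mem_image_of_mem A hx, 0, hK, rfl⟩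

theorem isClosed_image_add_of_recXSet_eq (hK : IsClosedConvexCone K) (hC : IsClosedConvexCone C)
    (htriv : recXSet A K C = {0}) : IsClosed (⇑A '' C + K) := by
  let L : E × E' →L[ℝ] E' := A.toContinuousLinearMap.coprod (ContinuousLinearMap.id ℝ E')
  have himage : L '' (C ×ˢ K) = ⇑A '' C + K := by
    ext y
    simp [L, Set.mem_add, and_assoc]
  have hker : ∀ q ∈ C ×ˢ K, L q = 0 → q = 0 := by
    rintro ⟨x, k⟩ ⟨hx, hk⟩ hL
    have hAx : A x = -k := eq_neg_of_add_eq_zero_left hL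
    have hx0 : x = 0 := by
      simpa [htriv] using (show x ∈ recXSet A K C from ⟨hx, by simpa [hAx] using hk⟩)
    subst hx0
    have hk0 : k = 0 := by simpa using hAx.symm
    rw [hk0, Prod.mk_zero_zero]
  rw [← himage]
  exact isClosed_image_of_cone L (hC.closed.prod hK.closed)
    (fun q hq t ht => ⟨hC.smul_mem hq.1 ht.le, hK.smul_mem hq.2 ht.le⟩) hker

theorem isClosedConvexCone_image_add (hK : IsClosedConvexCone K) (hC : IsClosedConvexCone C)
    (htriv : recXSet A K C = {0}) : IsClosedConvexCone (⇑A '' C + K) where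
  closed := isClosed_image_add_of_recXSet_eq A hK hC htriv
  convex := (hC.convex.linear_image A).add hK.convex
  smul_mem := by
    rintro _ ⟨_, ⟨x, hx, rfl⟩, k, hk, rfl⟩ t ht
    exact ⟨A (t • x), mem_image_of_mem A (hC.smul_mem hx ht), t • k, hK.smul_mem hk ht,
      by rw [map_smul, smul_add]⟩
  zero_mem := ⟨A 0, mem_image_of_mem A hC.zero_mem, 0, hK.zero_mem, by simp⟩

end RecessionCones

theorem stmt13_general (A : E →ₗ[ℝ] E') (K : Set E') (C : Set E)
    (hK : IsClosedConvexCone K) (hC : IsClosedConvexCone C)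
    (htriv : recXSet A K C = {0}) :
    ∀ b : E',
      (b ∈ dualCone (recYSet A K C) ↔ (Xfeas A K C b).Nonempty) ∧
      ((Xfeas A K C b).Nonempty ↔ AlmostFeasX A K C b) := by
  intro b
  have hD := isClosedConvexCone_image_add A hK hC htriv
  rw [recYSet_eq_dualCone_image_add A hK.zero_mem hC.zero_mem, hD.dualCone_dualCone,
    almostFeasX_iff_mem_closure, hD.closed.closure_eq, Xfeas_nonempty_iff_mem_image_add]
  exact ⟨Iff.rfl, Iff.rfl⟩

theorem stmt13 (A : E →ₗ[ℝ] E') (K : Set E') (C : Set E)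
    (hK : IsClosedConvexCone K) (hC : IsClosedConvexCone C)
    (htriv : recXSet A K C = {0})
    (hcond : (∃ S : Submodule ℝ E, (S : Set E) = C) ∨
      ((⇑A '' intrinsicInterior ℝ C) ∩ (Submodule.span ℝ K : Set E')).Nonempty) :
    ∀ b : E',
      (b ∈ dualCone (recYSet A K C) ↔ (Xfeas A K C b).Nonempty) ∧
      ((Xfeas A K C b).Nonempty ↔ AlmostFeasX A K C b) :=
  stmt13_general A K C hK hC htriv
end

section
/- Let Q ⊆ E' be a nonempty closed convex cone, G : E → E' an affine map with G⁻¹(Q) nonempty, L_G : E → E' the linear map L_G(x) = G(0) − G(x), and L_G* its adjoint. If any of the following holds: (1) G⁻¹(relint Q) ≠ ∅; (2) L_G⁻¹(relint Q) ≠ ∅; (3) ker(L_G*) ∩ relint(Q*) ≠ ∅; (4) every x ∈ Q ∩ range(L_G) lies in the lineality space Q ∩ (−Q); (5) every x ∈ Q* ∩ ker(L_G*) is orthogonal to the linear span of Q; then the barrier cone of G⁻¹(Q) equals L_G*(Q*): {c ∈ E : {⟨c,x⟩ : x ∈ G⁻¹(Q)} is bounded above} = L_G*(Q*). -/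
open RealInnerProductSpace Set Pointwise

variable {E E' : Type*}
  [NormedAddCommGroup E] [InnerProductSpace ℝ E] [FiniteDimensional ℝ E]
  [NormedAddCommGroup E'] [InnerProductSpace ℝ E'] [FiniteDimensional ℝ E']

/-!
Write `G x = b - A x` with `A = L_G` and `b = G 0`. Weak duality gives `A*(Q*) ⊆` barrier cone.
Conversely, let `⟪c, ·⟫ ≤ μ` on the feasible set. Separating `(c, μ)` from the cone of dual
certificates `{(A* y, ⟪b, y⟫ + r) : y ∈ Q*, r ≥ 0}` would produce either a feasible point beating
`μ` or a feasible ray along which `⟪c, ·⟫` is unbounded; so `(c, μ)` lies in the closure of that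
cone, and `c` in the closure of `A*(Q*)`.

It remains to remove the closures. The linear image of a closed cone is closed when the kernel
meets the cone only inside its lineality space (normalize and use compactness of the unit sphere).
Under Slater's condition (1) this holds for the certificate cone, and under (2) and (5) for `A*`
on `Q*`. Under (3), `A*(Q*)` is the image of the span of `Q*`. Under (4), `Q* + ker A*` is a convex
cone whose closure is the subspace `(Q ∩ range A)ᗮ`, hence it equals that subspace.
-/

section IntrinsicInterior

variable {V : Type*} [NormedAddCommGroup V] [NormedSpace ℝ V] {s : Set V} {x z : V}

theorem subset_direction_affineSpan (hs : (0 : V) ∈ s) : s ⊆ (affineSpan ℝ s).direction := by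
  intro y hy
  simpa [direction_affineSpan] using vsub_mem_vectorSpan ℝ hy hs

theorem exists_pos_forall_add_mem_of_mem_intrinsicInterior (hx : x ∈ intrinsicInterior ℝ s) :
    ∃ δ > 0, ∀ z ∈ (affineSpan ℝ s).direction, ‖z‖ < δ → x + z ∈ s := by
  obtain ⟨p, hp, rfl⟩ := mem_intrinsicInterior.1 hx
  obtain ⟨δ, hδ, hball⟩ := Metric.mem_nhds_iff.1 (isOpen_interior.mem_nhds hp)
  refine ⟨δ, hδ, fun z hz hzδ => ?_⟩
  let q : affineSpan ℝ s := ⟨z +ᵥ (p : V), AffineSubspace.vadd_mem_of_mem_direction hz p.2⟩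
  have hq : q ∈ Metric.ball p δ := by simpa [q, Subtype.dist_eq, dist_eq_norm] using hzδ
  simpa [q, add_comm] using interior_subset (hball hq)

theorem exists_pos_add_smul_mem_of_mem_intrinsicInterior (hx : x ∈ intrinsicInterior ℝ s)
    (hz : z ∈ (affineSpan ℝ s).direction) : ∃ ε : ℝ, 0 < ε ∧ x + ε • z ∈ s := by
  obtain ⟨δ, hδ, hball⟩ := exists_pos_forall_add_mem_of_mem_intrinsicInterior hx
  have hz1 : 0 < ‖z‖ + 1 := by positivity
  refine ⟨δ / (‖z‖ + 1), by positivity, hball _ (Submodule.smul_mem _ _ hz) ?_⟩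
  rw [norm_smul, Real.norm_of_nonneg (by positivity), div_mul_eq_mul_div, div_lt_iff₀ hz1]
  nlinarith [norm_nonneg z]

end IntrinsicInterior

namespace PointedCone

variable {V W : Type*} [NormedAddCommGroup V] [NormedSpace ℝ V] [FiniteDimensional ℝ V]
  [NormedAddCommGroup W] [NormedSpace ℝ W]

theorem coe_eq_of_closure_eq {S : PointedCone ℝ V} {U : Submodule ℝ V}
    (h : closure (S : Set V) = U) : (S : Set V) = U := by
  have hSU : (S : Set V) ⊆ U := h ▸ subset_closure
  refine hSU.antisymm fun w hw => ?_
  obtain ⟨c₀, hc₀⟩ := Set.Nonempty.intrinsicInterior S.convex ⟨0, S.zero_mem⟩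
  obtain ⟨δ, hδ, hball⟩ := exists_pos_forall_add_mem_of_mem_intrinsicInterior hc₀
  set D := (affineSpan ℝ (S : Set V)).direction
  have hUD : (U : Set V) ⊆ D := h ▸ (Submodule.closed_of_finiteDimensional D).closure_subset_iff.2
    (subset_direction_affineSpan S.zero_mem)
  have hwc₀ : w - c₀ ∈ U := U.sub_mem hw (hSU (intrinsicInterior_subset hc₀))
  -- Approximate `w - c₀` by `s₁ ∈ S`; then `w - s₁` lies in the relative ball of `S` around `c₀`.
  obtain ⟨s₁, hs₁, hdist⟩ := Metric.mem_closure_iff.1 (by rw [h]; exact hwc₀) δ hδ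
  have hnear := hball _ (hUD (U.sub_mem hwc₀ (hSU hs₁))) (by rwa [← dist_eq_norm])
  have hsum : s₁ + (c₀ + (w - c₀ - s₁)) = w := by abel
  exact hsum ▸ S.add_mem hs₁ hnear

theorem exists_pos_mul_norm_le_norm_map {K : PointedCone ℝ V} (hK : IsClosed (K : Set V))
    (f : V →ₗ[ℝ] W) (hf : ∀ x ∈ K, x ≠ 0 → f x ≠ 0) :
    ∃ m > 0, ∀ x ∈ K, m * ‖x‖ ≤ ‖f x‖ := by
  obtain ⟨m, hm, hmS⟩ := ((isCompact_sphere (0 : V) 1).inter_left hK).exists_forall_le'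
    f.continuous_of_finiteDimensional.norm.continuousOn
    fun u hu => norm_pos_iff.2 (hf u hu.1 (ne_zero_of_mem_unit_sphere ⟨u, hu.2⟩))
  refine ⟨m, hm, fun x hx => ?_⟩
  rcases eq_or_ne x 0 with rfl | hx0
  · simp
  have hx' : 0 < ‖x‖ := norm_pos_iff.2 hx0
  have := hmS (‖x‖⁻¹ • x) ⟨K.smul_mem (inv_nonneg.2 hx'.le) hx, by simp [norm_smul, hx'.ne']⟩
  rw [map_smul, norm_smul, norm_inv, norm_norm, inv_mul_eq_div, le_div_iff₀ hx'] at this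
  exact this

theorem isClosed_image_of_map_ne_zero {K : PointedCone ℝ V} (hK : IsClosed (K : Set V))
    (f : V →ₗ[ℝ] W) (hf : ∀ x ∈ K, x ≠ 0 → f x ≠ 0) : IsClosed (f '' K) := by
  obtain ⟨m, hm, hfm⟩ := exists_pos_mul_norm_le_norm_map hK f hf
  refine isClosed_of_closure_subset fun w hw => ?_
  -- Points of `K` mapped within distance `1` of `w` lie in a fixed ball, whose image is compact.
  set R := (‖w‖ + 1) / m
  have hcpt : IsCompact (f '' (K ∩ Metric.closedBall 0 R)) :=
    ((isCompact_closedBall 0 R).inter_left hK).image f.continuous_of_finiteDimensional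
  refine image_mono inter_subset_left (hcpt.isClosed.closure_subset (Metric.mem_closure_iff.2
    fun ε hε => ?_))
  obtain ⟨_, ⟨x, hx, rfl⟩, hxw⟩ := Metric.mem_closure_iff.1 hw (min ε 1) (by positivity)
  refine ⟨f x, ⟨x, ⟨hx, ?_⟩, rfl⟩, hxw.trans_le (min_le_left _ _)⟩
  rw [mem_closedBall_zero_iff, le_div_iff₀ hm, mul_comm]
  have := norm_le_norm_add_norm_sub' (f x) w
  rw [← dist_eq_norm, dist_comm] at this
  linarith [hfm x hx, min_le_right ε 1]

theorem isClosed_image_of_ker_subset_lineal {K : PointedCone ℝ V} (hK : IsClosed (K : Set V))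
    (f : V →ₗ[ℝ] W) (hf : ∀ x ∈ K, f x = 0 → x ∈ K.lineal) : IsClosed (f '' K) := by
  obtain ⟨M, hNM⟩ := (K.lineal ⊓ LinearMap.ker f).exists_isCompl
  -- Subtracting the component along `K.lineal ⊓ ker f` keeps points in `K` and fixes `f`.
  have himage : f '' K = f '' (K ⊓ (M : PointedCone ℝ V) : PointedCone ℝ V) := by
    refine (image_mono inf_le_left).antisymm' ?_
    rintro _ ⟨x, hx, rfl⟩
    obtain ⟨n, hn, y, hy, rfl⟩ := Submodule.mem_sup.1 (hNM.sup_eq_top ▸ Submodule.mem_top : x ∈ _)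
    have hnK : n ∈ K.lineal := (Submodule.mem_inf.1 hn).1
    have hnf : f n = 0 := (Submodule.mem_inf.1 hn).2
    refine ⟨y, ⟨?_, hy⟩, by simp [hnf]⟩
    simpa using K.add_mem hx (mem_lineal.1 hnK).2
  rw [himage]
  refine isClosed_image_of_map_ne_zero (hK.inter (Submodule.closed_of_finiteDimensional M)) f ?_
  rintro x ⟨hxK, hxM⟩ hx0 hfx
  exact hx0 ((Submodule.disjoint_def.1 hNM.disjoint) x ⟨hf x hxK hfx, hfx⟩ hxM)

end PointedCone

section DualCone

variable {F : Type*} [NormedAddCommGroup F] [InnerProductSpace ℝ F]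

namespace IsClosedConvexCone

variable {K : Set F}

theorem add_mem_s18 (hK : IsClosedConvexCone K) {x y : F} (hx : x ∈ K) (hy : y ∈ K) : x + y ∈ K := by
  have h := hK.smul_mem (hK.convex hx hy (by norm_num : (0 : ℝ) ≤ 1 / 2)
    (by norm_num : (0 : ℝ) ≤ 1 / 2) (by norm_num)) (by norm_num : (0 : ℝ) ≤ 2)
  rwa [smul_add, smul_smul, smul_smul, show (2 : ℝ) * (1 / 2) = 1 by norm_num, one_smul,
    one_smul] at h

def toProperCone (hK : IsClosedConvexCone K) : ProperCone ℝ F where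
  carrier := K
  add_mem' := hK.add_mem_s18
  zero_mem' := hK.zero_mem
  smul_mem' c _ hx := hK.smul_mem hx c.2
  isClosed' := hK.closed

theorem dualCone_dualCone_s18 [CompleteSpace F] (hK : IsClosedConvexCone K) :
    dualCone (dualCone K) = K :=
  congrArg SetLike.coe (ProperCone.innerDual_innerDual hK.toProperCone)

end IsClosedConvexCone

theorem isClosedConvexCone_dualCone [CompleteSpace F] (S : Set F) :
    IsClosedConvexCone (dualCone S) where
  closed := (ProperCone.innerDual S).isClosed
  convex := (ProperCone.innerDual S).convex
  smul_mem _ hx _ ht := (ProperCone.innerDual S).toPointedCone.smul_mem ht hx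
  zero_mem := (ProperCone.innerDual S).zero_mem

theorem dualCone_closure (s : Set F) : dualCone (closure s) = dualCone s := by
  refine Subset.antisymm (fun y hy x hx => hy x (subset_closure hx)) fun y hy => ?_
  have hclosed : IsClosed {x : F | 0 ≤ ⟪x, y⟫} :=
    isClosed_le continuous_const (continuous_id.inner continuous_const)
  exact hclosed.closure_subset_iff.2 hy

theorem PointedCone.closure_eq_dualCone_dualCone [CompleteSpace F] (S : PointedCone ℝ F) :
    closure (S : Set F) = dualCone (dualCone S) := by
  rw [← dualCone_closure (S : Set F)]
  exact (congrArg SetLike.coe (ProperCone.innerDual_innerDual (Submodule.closure S))).symm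

theorem dualCone_add {s t : Set F} (hs : 0 ∈ s) (ht : 0 ∈ t) :
    dualCone (s + t) = dualCone s ∩ dualCone t := by
  ext y
  refine ⟨fun h => ⟨fun x hx => ?_, fun x hx => ?_⟩, fun ⟨hys, hyt⟩ => ?_⟩
  · simpa using h (x + 0) (add_mem_add hx ht)
  · simpa using h (0 + x) (add_mem_add hs hx)
  · rintro _ ⟨x, hx, z, hz, rfl⟩
    rw [inner_add_left]
    exact add_nonneg (hys x hx) (hyt z hz)

theorem dualCone_submodule (U : Submodule ℝ F) : dualCone (U : Set F) = Uᗮ := by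
  ext y
  refine ⟨fun h => (Submodule.mem_orthogonal U y).2 fun u hu => ?_, fun h u hu => ?_⟩
  · have := h (-u) (U.neg_mem hu)
    rw [inner_neg_left] at this
    exact le_antisymm (by linarith) (h u hu)
  · exact ((Submodule.mem_orthogonal U y).1 h u hu).ge

theorem neg_mem_dualCone_of_inner_eq_zero {Q : Set F} {y q₀ : F} (hy : y ∈ dualCone Q)
    (hq₀ : q₀ ∈ intrinsicInterior ℝ Q) (h : ⟪q₀, y⟫ = 0) : -y ∈ dualCone Q := by
  intro q hq
  -- Moving from `q₀` slightly away from `q` stays in `Q`, which forces `⟪q, y⟫ ≤ 0`.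
  obtain ⟨ε, hε, hmem⟩ := exists_pos_add_smul_mem_of_mem_intrinsicInterior hq₀
    (direction_affineSpan ℝ Q ▸ vsub_mem_vectorSpan ℝ (intrinsicInterior_subset hq₀) hq)
  have := hy _ hmem
  rw [inner_add_left, real_inner_smul_left, vsub_eq_sub, inner_sub_left, h] at this
  rw [inner_neg_right]
  nlinarith

end DualCone

section BarrierCone

variable {F F' : Type*} [NormedAddCommGroup F] [InnerProductSpace ℝ F]
  [NormedAddCommGroup F'] [InnerProductSpace ℝ F'] {Q : Set F'} {A : F →ₗ[ℝ] F'} {b : F'}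

def barrierCone (S : Set F) : Set F :=
  {c | BddAbove ((fun x => ⟪c, x⟫) '' S)}

theorem inner_add_mul_nonneg_of_forall_inner_le (hQ : IsClosedConvexCone Q) {x₀ : F}
    (hx₀ : b - A x₀ ∈ Q) {c : F} {μ : ℝ} (hμ : ∀ x, b - A x ∈ Q → ⟪c, x⟫ ≤ μ) {d : F} {s : ℝ}
    (hs : 0 ≤ s) (hd : A d + s • b ∈ Q) : 0 ≤ ⟪c, d⟫ + s * μ := by
  rcases hs.eq_or_lt with rfl | hs
  · -- `x₀ - t • d` stays feasible for all `t ≥ 0`, so `⟪c, d⟫ < 0` would make `c` unbounded.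
    rw [zero_smul, add_zero] at hd
    rw [zero_mul, add_zero]
    by_contra! hcd
    set t := (μ - ⟪c, x₀⟫ + 1) / -⟪c, d⟫
    have ht : t * -⟪c, d⟫ = μ - ⟪c, x₀⟫ + 1 := div_mul_cancel₀ _ (by linarith)
    have hfeas : b - A (x₀ - t • d) ∈ Q := by
      have ht0 : 0 ≤ t := div_nonneg (by linarith [hμ x₀ hx₀]) (by linarith)
      convert hQ.add_mem_s18 hx₀ (hQ.smul_mem hd ht0) using 1
      rw [map_sub, map_smul]
      abel
    have := hμ _ hfeas
    rw [inner_sub_right, real_inner_smul_right] at this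
    linarith
  · have hfeas : b - A (-(s⁻¹ • d)) ∈ Q := by
      convert hQ.smul_mem hd (inv_nonneg.2 hs.le) using 1
      rw [map_neg, map_smul, smul_add, smul_smul, inv_mul_cancel₀ hs.ne', one_smul]
      abel
    have := hμ _ hfeas
    rw [inner_neg_right, real_inner_smul_right] at this
    have := mul_le_mul_of_nonneg_left this hs.le
    rw [mul_neg, ← mul_assoc, mul_inv_cancel₀ hs.ne', one_mul] at this
    linarith

end BarrierCone

section BarrierConeFiniteDimensional

variable {F F' : Type*} [NormedAddCommGroup F] [InnerProductSpace ℝ F] [FiniteDimensional ℝ F]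
  [NormedAddCommGroup F'] [InnerProductSpace ℝ F'] [FiniteDimensional ℝ F']
  {Q : Set F'} {A : F →ₗ[ℝ] F'} {b : F'}

theorem adjoint_image_dualCone_subset_barrierCone :
    LinearMap.adjoint A '' dualCone Q ⊆ barrierCone {x | b - A x ∈ Q} := by
  rintro _ ⟨y, hy, rfl⟩
  refine ⟨⟪y, b⟫, ?_⟩
  rintro _ ⟨x, hx, rfl⟩
  have := hy _ hx
  rw [inner_sub_left, real_inner_comm, real_inner_comm y] at this
  change ⟪LinearMap.adjoint A y, x⟫ ≤ ⟪y, b⟫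
  rw [LinearMap.adjoint_inner_left]
  linarith

/-- The adjoint of the homogenization `(x, t) ↦ (A x + t • b, t)`. A pair `(c, μ)` in the image of
`dualCone Q ×ˢ Ici 0` is a dual certificate: `c = A* y` with `y ∈ Q*` and `⟪b, y⟫ ≤ μ`. -/
noncomputable def homogenizedAdjoint (A : F →ₗ[ℝ] F') (b : F') : F' × ℝ →ₗ[ℝ] F × ℝ :=
  (LinearMap.adjoint A ∘ₗ LinearMap.fst ℝ F' ℝ).prod
    (innerₗ F' b ∘ₗ LinearMap.fst ℝ F' ℝ + LinearMap.snd ℝ F' ℝ)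

@[simp]
theorem homogenizedAdjoint_apply (y : F') (r : ℝ) :
    homogenizedAdjoint A b (y, r) = (LinearMap.adjoint A y, ⟪b, y⟫ + r) := rfl

theorem mem_closure_image_homogenizedAdjoint (hQ : IsClosedConvexCone Q) {x₀ : F}
    (hx₀ : b - A x₀ ∈ Q) {c : F} {μ : ℝ} (hμ : ∀ x, b - A x ∈ Q → ⟪c, x⟫ ≤ μ) :
    (c, μ) ∈ closure (homogenizedAdjoint A b '' (dualCone Q ×ˢ Ici 0)) := by
  let K : PointedCone ℝ (F' × ℝ) :=
    (ProperCone.innerDual Q : PointedCone ℝ F').prod (PointedCone.positive ℝ ℝ)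
  let C : ProperCone ℝ (F × ℝ) := Submodule.closure (K.map (homogenizedAdjoint A b))
  by_contra h
  obtain ⟨f, hfC, hfcμ⟩ := C.hyperplane_separation_point (x₀ := (c, μ)) h
  set d := (InnerProductSpace.toDual ℝ F).symm (f.comp (ContinuousLinearMap.inl ℝ F ℝ))
  set s := f (0, 1)
  have hf (x : F) (t : ℝ) : f (x, t) = ⟪d, x⟫ + t * s := by
    have hxt : (x, t) = ContinuousLinearMap.inl ℝ F ℝ x + t • ((0 : F), (1 : ℝ)) := by simp
    rw [hxt, map_add, map_smul, InnerProductSpace.toDual_symm_apply, smul_eq_mul]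
    rfl
  have hfT (y : F') (hy : y ∈ dualCone Q) (r : ℝ) (hr : 0 ≤ r) :
      0 ≤ ⟪A d + s • b, y⟫ + r * s := by
    have : 0 ≤ f (homogenizedAdjoint A b (y, r)) := hfC _ (subset_closure ⟨(y, r), ⟨hy, hr⟩, rfl⟩)
    rw [homogenizedAdjoint_apply, hf, LinearMap.adjoint_inner_right] at this
    rw [inner_add_left, real_inner_smul_left]
    linarith
  have hs : 0 ≤ s := by simpa using hfT 0 (fun x _ => by simp) 1 zero_le_one
  have hd : A d + s • b ∈ Q := hQ.dualCone_dualCone_s18 ▸ fun y hy => by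
    rw [real_inner_comm]
    simpa using hfT y hy 0 le_rfl
  have := inner_add_mul_nonneg_of_forall_inner_le hQ hx₀ hμ hs hd
  rw [hf, real_inner_comm] at hfcμ
  linarith

theorem barrierCone_subset_of_isClosed (hQ : IsClosedConvexCone Q) {x₀ : F}
    (hx₀ : b - A x₀ ∈ Q) (hcl : IsClosed (LinearMap.adjoint A '' dualCone Q)) :
    barrierCone {x | b - A x ∈ Q} ⊆ LinearMap.adjoint A '' dualCone Q := by
  rintro c ⟨μ, hμ⟩
  have hcμ := mem_closure_image_homogenizedAdjoint hQ hx₀ fun x hx => hμ ⟨x, hx, rfl⟩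
  refine hcl.closure_subset (map_mem_closure continuous_fst hcμ ?_)
  rintro _ ⟨⟨y, r⟩, ⟨hy, -⟩, rfl⟩
  exact ⟨y, hy, rfl⟩

theorem barrierCone_subset_of_mem_intrinsicInterior (hQ : IsClosedConvexCone Q) {x₀ : F}
    (hx₀ : b - A x₀ ∈ intrinsicInterior ℝ Q) :
    barrierCone {x | b - A x ∈ Q} ⊆ LinearMap.adjoint A '' dualCone Q := by
  rintro c ⟨μ, hμ⟩
  have hcμ := mem_closure_image_homogenizedAdjoint hQ (intrinsicInterior_subset hx₀)
    fun x hx => hμ ⟨x, hx, rfl⟩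
  let K : PointedCone ℝ (F' × ℝ) :=
    (ProperCone.innerDual Q : PointedCone ℝ F').prod (PointedCone.positive ℝ ℝ)
  have hcl : IsClosed (homogenizedAdjoint A b '' K) := by
    refine PointedCone.isClosed_image_of_ker_subset_lineal
      ((ProperCone.innerDual Q).isClosed.prod isClosed_Ici) _ ?_
    rintro ⟨y, r⟩ ⟨hy, hr⟩ h0
    change y ∈ dualCone Q at hy
    simp only [homogenizedAdjoint_apply, Prod.mk_eq_zero] at h0
    -- Pairing with the Slater point forces `r = 0` and `⟪b - A x₀, y⟫ = 0`.
    have hpair : ⟪b - A x₀, y⟫ = -r := by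
      rw [inner_sub_left, ← LinearMap.adjoint_inner_right, h0.1, inner_zero_right, sub_zero]
      linarith [h0.2]
    have hr0 : r = 0 := le_antisymm (by linarith [hy _ (intrinsicInterior_subset hx₀)]) hr
    refine ⟨⟨hy, hr⟩, neg_mem_dualCone_of_inner_eq_zero hy hx₀ (by rw [hpair, hr0, neg_zero]), ?_⟩
    simp [hr0]
  obtain ⟨⟨y, r⟩, ⟨hy, -⟩, hyr⟩ := hcl.closure_eq ▸ hcμ
  exact ⟨y, hy, congrArg Prod.fst hyr⟩

end BarrierConeFiniteDimensional

section ClosedAdjointImage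

variable {F F' : Type*} [NormedAddCommGroup F] [InnerProductSpace ℝ F] [FiniteDimensional ℝ F]
  [NormedAddCommGroup F'] [InnerProductSpace ℝ F'] [FiniteDimensional ℝ F']
  {Q : Set F'} {A : F →ₗ[ℝ] F'}

theorem isClosed_adjoint_image_dualCone
    (h : ∀ y ∈ dualCone Q, LinearMap.adjoint A y = 0 → -y ∈ dualCone Q) :
    IsClosed (LinearMap.adjoint A '' dualCone Q) :=
  PointedCone.isClosed_image_of_ker_subset_lineal (K := (ProperCone.innerDual Q : PointedCone ℝ F'))
    (ProperCone.innerDual Q).isClosed _ fun y hy h0 => ⟨hy, h y hy h0⟩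

theorem isClosed_adjoint_image_dualCone_of_mem_intrinsicInterior {y₀ : F'}
    (hy₀ : LinearMap.adjoint A y₀ = 0) (hy₀Q : y₀ ∈ intrinsicInterior ℝ (dualCone Q)) :
    IsClosed (LinearMap.adjoint A '' dualCone Q) := by
  have hD := isClosedConvexCone_dualCone Q
  suffices LinearMap.adjoint A '' dualCone Q =
      LinearMap.adjoint A '' Submodule.span ℝ (dualCone Q) by
    rw [this, ← Submodule.map_coe]
    exact Submodule.closed_of_finiteDimensional _
  refine (image_mono Submodule.subset_span).antisymm ?_
  rintro _ ⟨z, hz, rfl⟩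
  obtain ⟨ε, hε, hmem⟩ := exists_pos_add_smul_mem_of_mem_intrinsicInterior hy₀Q
    (Submodule.span_le.2 (subset_direction_affineSpan hD.zero_mem) hz)
  refine ⟨ε⁻¹ • (y₀ + ε • z), hD.smul_mem hmem (inv_nonneg.2 hε.le), ?_⟩
  rw [map_smul, map_add, hy₀, zero_add, map_smul, smul_smul, inv_mul_cancel₀ hε.ne', one_smul]

theorem isClosed_adjoint_image_dualCone_of_inter_range_subset (hQ : IsClosedConvexCone Q)
    (h : ∀ x ∈ Q ∩ range A, x ∈ Q ∩ -Q) : IsClosed (LinearMap.adjoint A '' dualCone Q) := by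
  set R := LinearMap.range A
  set U : Submodule ℝ F' := (hQ.toProperCone : PointedCone ℝ F').lineal ⊓ R
  have hU : Q ∩ R = U := by
    ext x
    exact ⟨fun hx => ⟨h x hx, hx.2⟩, fun ⟨hx, hxR⟩ => ⟨hx.1, hxR⟩⟩
  -- `S = Q* + Rᗮ` is dense in `Uᗮ`, hence equal to it, and `A*` kills `Rᗮ`.
  let S : PointedCone ℝ F' := (ProperCone.innerDual Q : PointedCone ℝ F') ⊔ (Rᗮ : PointedCone ℝ F')
  have hS : (S : Set F') = dualCone Q + Rᗮ := Submodule.coe_sup _ _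
  have hSdual : dualCone (S : Set F') = U := by
    rw [hS, dualCone_add (isClosedConvexCone_dualCone Q).zero_mem Rᗮ.zero_mem,
      hQ.dualCone_dualCone_s18, dualCone_submodule, Submodule.orthogonal_orthogonal, hU]
  have hSU : (S : Set F') = Uᗮ := PointedCone.coe_eq_of_closure_eq (by
    rw [S.closure_eq_dualCone_dualCone, hSdual, dualCone_submodule])
  have hker (v : F') (hv : v ∈ Rᗮ) : LinearMap.adjoint A v = 0 := ext_inner_left ℝ fun x => by
    rw [LinearMap.adjoint_inner_right, inner_zero_right]
    exact (Submodule.mem_orthogonal R v).1 hv _ (LinearMap.mem_range_self A x)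
  have himage : LinearMap.adjoint A '' dualCone Q = LinearMap.adjoint A '' Uᗮ := by
    rw [← hSU, hS]
    refine Subset.antisymm (image_mono fun y hy => ⟨y, hy, 0, Rᗮ.zero_mem, add_zero y⟩) ?_
    rintro _ ⟨_, ⟨y, hy, v, hv, rfl⟩, rfl⟩
    exact ⟨y, hy, by rw [map_add, hker v hv, add_zero]⟩
  rw [himage, ← Submodule.map_coe]
  exact Submodule.closed_of_finiteDimensional _

end ClosedAdjointImage

theorem stmt18 (Q : Set E') (hQ : IsClosedConvexCone Q)
    (G : E →ᵃ[ℝ] E') (hGne : (⇑G ⁻¹' Q).Nonempty)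
    (LG : E →ₗ[ℝ] E') (hLG : ∀ x, LG x = G 0 - G x)
    (hcond :
      (⇑G ⁻¹' intrinsicInterior ℝ Q).Nonempty ∨
      (⇑LG ⁻¹' intrinsicInterior ℝ Q).Nonempty ∨
      ((LinearMap.ker (LinearMap.adjoint LG) : Set E') ∩
        intrinsicInterior ℝ (dualCone Q)).Nonempty ∨
      (∀ x ∈ Q ∩ Set.range ⇑LG, x ∈ Q ∩ -Q) ∨
      (∀ x ∈ dualCone Q ∩ (LinearMap.ker (LinearMap.adjoint LG) : Set E'),
        x ∈ ((Submodule.span ℝ Q)ᗮ : Set E'))) :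
    {c : E | BddAbove ((fun x => ⟪c, x⟫) '' (⇑G ⁻¹' Q))} =
      ⇑(LinearMap.adjoint LG) '' dualCone Q := by
  have hG (x : E) : G x = G 0 - LG x := by rw [hLG, sub_sub_cancel]
  have hfeas : ⇑G ⁻¹' Q = {x | G 0 - LG x ∈ Q} := ext fun x => by
    rw [mem_preimage, hG x]
    rfl
  change barrierCone (⇑G ⁻¹' Q) = _
  rw [hfeas]
  obtain ⟨x₀, hx₀⟩ := hfeas ▸ hGne
  refine Subset.antisymm ?_ adjoint_image_dualCone_subset_barrierCone
  rcases hcond with ⟨x, hx⟩ | ⟨x, hx⟩ | ⟨y, hy, hy'⟩ | hrange | hker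
  · rw [mem_preimage, hG x] at hx
    exact barrierCone_subset_of_mem_intrinsicInterior hQ hx
  · refine barrierCone_subset_of_isClosed hQ hx₀
      (isClosed_adjoint_image_dualCone fun y hy h0 => neg_mem_dualCone_of_inner_eq_zero hy hx ?_)
    rw [← LinearMap.adjoint_inner_right, h0, inner_zero_right]
  · exact barrierCone_subset_of_isClosed hQ hx₀
      (isClosed_adjoint_image_dualCone_of_mem_intrinsicInterior hy hy')
  · exact barrierCone_subset_of_isClosed hQ hx₀
      (isClosed_adjoint_image_dualCone_of_inter_range_subset hQ hrange)
  · refine barrierCone_subset_of_isClosed hQ hx₀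
      (isClosed_adjoint_image_dualCone fun y hy h0 q hq => ?_)
    rw [inner_neg_right, (Submodule.mem_orthogonal _ y).1 (hker y ⟨hy, h0⟩) q
      (Submodule.subset_span hq), neg_zero]
end
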